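/- arXiv:2408.14633 — 3 statements merged into one kernel-verified Lean document; each statement's English description precedes it below -/
import Mathlib

section
/- If G is a 1-extendable graph, then for every module M of G, the induced subgraph G[M] is 1-extendable. -/
open scoped Classical

variable {V : Type*}

/-- `S` is an independent set of the graph `G`. -/
def IndepF (G : SimpleGraph V) (S : Finset V) : Prop :=
  ∀ u ∈ S, ∀ v ∈ S, ¬ G.Adj u v

/-- The independence number of `G`. -/
noncomputable def alphaN [Fintype V] (G : SimpleGraph V) : ℕ :=
  Finset.univ.powerset.sup fun S => if IndepF G S then S.card else 0

/-- `G` is 1-extendable: every vertex belongs to a maximum independent set. -/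
def OneExt [Fintype V] (G : SimpleGraph V) : Prop :=
  ∀ v : V, ∃ S : Finset V, v ∈ S ∧ IndepF G S ∧ S.card = alphaN G

/-- The 1-extendable chromatic number of `G`. -/
noncomputable def chiOneExt [Fintype V] (G : SimpleGraph V) : ℕ :=
  sInf {k | ∃ c : V → Fin k, ∀ i : Fin k, OneExt (G.induce {v | c v = i})}

/-- The join (complete sum) of two graphs. -/
def gJoin {α β : Type*} (G : SimpleGraph α) (H : SimpleGraph β) : SimpleGraph (α ⊕ β) where
  Adj u v := match u, v with
    | Sum.inl u, Sum.inl v => G.Adj u v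
    | Sum.inr u, Sum.inr v => H.Adj u v
    | Sum.inl _, Sum.inr _ => True
    | Sum.inr _, Sum.inl _ => True
  symm := ⟨by rintro (u|u) (v|v) h <;> simp_all [SimpleGraph.adj_comm]⟩
  loopless := ⟨by rintro (u|u) h <;> simp_all⟩

/-- `M` is a module of `G`. -/
def IsModule (G : SimpleGraph V) (M : Set V) : Prop :=
  ∀ v ∉ M, (∀ m ∈ M, G.Adj v m) ∨ (∀ m ∈ M, ¬ G.Adj v m)


/-!
Fix `v ∈ M` and a maximum independent set `S` of `G` containing `v`. Every vertex of `S` outside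
`M` is non-adjacent to `v`, hence, `M` being a module, to all of `M`. So any independent set `U`
of `G[M]` can replace `S ∩ M` inside `S`, giving `|S \ M| + |U| ≤ α(G) = |S \ M| + |S ∩ M|`.
Thus `S ∩ M` is a maximum independent set of `G[M]` containing `v`.
-/

open Finset

lemma IndepF.card_le_alphaN [Fintype V] {G : SimpleGraph V} {S : Finset V} (hS : IndepF G S) :
    #S ≤ alphaN G := by
  have := le_sup (f := fun S => if IndepF G S then #S else 0) (mem_powerset.2 (subset_univ S))
  simpa [hS, alphaN] using this

lemma exists_indepF_card_eq_alphaN [Fintype V] (G : SimpleGraph V) :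
    ∃ S : Finset V, IndepF G S ∧ #S = alphaN G := by
  obtain ⟨S, -, hS⟩ := exists_mem_eq_sup univ.powerset ⟨∅, by simp⟩
    (fun S => if IndepF G S then #S else 0)
  by_cases hind : IndepF G S
  · exact ⟨S, hind, by rw [alphaN, hS, if_pos hind]⟩
  · exact ⟨∅, by simp [IndepF], by rw [card_empty, alphaN, hS, if_neg hind]⟩

lemma IndepF.card_eq_alphaN_of_forall_card_le [Fintype V] {G : SimpleGraph V} {S : Finset V}
    (hS : IndepF G S) (hmax : ∀ U : Finset V, IndepF G U → #U ≤ #S) : #S = alphaN G := by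
  obtain ⟨U, hU, hUcard⟩ := exists_indepF_card_eq_alphaN G
  exact le_antisymm hS.card_le_alphaN (hUcard ▸ hmax U hU)

lemma IndepF.subtype {G : SimpleGraph V} {S : Finset V} (hS : IndepF G S) (M : Set V) :
    IndepF (G.induce M) (S.subtype (· ∈ M)) := fun a ha b hb =>
  hS a (mem_subtype.1 ha) b (mem_subtype.1 hb)

namespace IsModule

variable {G : SimpleGraph V} {M : Set V} {S : Finset V} {v : V}

lemma not_adj_of_indepF (hM : IsModule G M) (hS : IndepF G S) (hvS : v ∈ S) (hvM : v ∈ M)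
    {x : V} (hxS : x ∈ S) (hxM : x ∉ M) {m : V} (hm : m ∈ M) : ¬ G.Adj x m :=
  (hM x hxM).elim (fun hall => absurd (hall v hvM) (hS x hxS v hvS)) (fun hnone => hnone m hm)

lemma indepF_filter_union_map (hM : IsModule G M) (hS : IndepF G S) (hvS : v ∈ S) (hvM : v ∈ M)
    {U : Finset M} (hU : IndepF (G.induce M) U) :
    IndepF G (S.filter (· ∉ M) ∪ U.map (Function.Embedding.subtype _)) := by
  intro a ha b hb
  simp only [mem_union, mem_filter, mem_map, Function.Embedding.coe_subtype] at ha hb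
  rcases ha with ⟨haS, haM⟩ | ⟨a, haU, rfl⟩ <;> rcases hb with ⟨hbS, hbM⟩ | ⟨b, hbU, rfl⟩
  · exact hS _ haS _ hbS
  · exact hM.not_adj_of_indepF hS hvS hvM haS haM b.2
  · exact fun hab => hM.not_adj_of_indepF hS hvS hvM hbS hbM a.2 hab.symm
  · exact hU a haU b hbU

lemma card_le_card_subtype [Fintype V] (hM : IsModule G M) (hS : IndepF G S)
    (hcard : #S = alphaN G) (hvS : v ∈ S) (hvM : v ∈ M) {U : Finset M}
    (hU : IndepF (G.induce M) U) : #U ≤ #(S.subtype (· ∈ M)) := by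
  have hdisj : Disjoint (S.filter (· ∉ M)) (U.map (Function.Embedding.subtype _)) :=
    disjoint_left.2 fun x hx hxU => by
      obtain ⟨a, -, rfl⟩ := mem_map.1 hxU
      exact (mem_filter.1 hx).2 a.2
  have hle := (hM.indepF_filter_union_map hS hvS hvM hU).card_le_alphaN
  rw [card_union_of_disjoint hdisj, card_map] at hle
  have hsplit := card_filter_add_card_filter_not (s := S) (· ∈ M)
  rw [card_subtype]
  omega

end IsModule

/-- If  is 1-extendable, then so is the subgraph induced by any module. -/
theorem module_oneExt [Fintype V] (G : SimpleGraph V) (hG : OneExt G)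
    (M : Set V) (hM : IsModule G M) :
    OneExt (G.induce M) := by
  intro v
  obtain ⟨S, hvS, hS, hcard⟩ := hG v
  exact ⟨S.subtype (· ∈ M), mem_subtype.2 hvS, hS.subtype M,
    (hS.subtype M).card_eq_alphaN_of_forall_card_le fun U hU =>
      hM.card_le_card_subtype hS hcard hvS v.2 hU⟩
end

section
/- For all non-negative integers α1, α2 and every k with 0 ≤ k ≤ α1 + α2, there exist non-negative integers k1 ≤ α1 and k2 ≤ α2 with k1 + k2 = k and max(k1 − 1, α1 − k1) + max(k2 − 1, α2 − k2) ≤ max(k − 1, α1 + α2 − k). -/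
/-- The splitting lemma for integers used in the disjoint-union case. -/
theorem split_lemma (a1 a2 k : ℕ) (hk : k ≤ a1 + a2) :
    ∃ k1 k2 : ℕ, k1 ≤ a1 ∧ k2 ≤ a2 ∧ k1 + k2 = k ∧
      max (k1 - 1) (a1 - k1) + max (k2 - 1) (a2 - k2) ≤ max (k - 1) (a1 + a2 - k) := by
  rcases le_or_gt (2 * k) (a1 + a2 + 1) with h | h
  · refine ⟨min k ((a1 + 1) / 2), k - min k ((a1 + 1) / 2), by omega, by omega, by omega, ?_⟩
    simp only [Nat.max_def]
    repeat' split
    all_goals omega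
  · refine ⟨max (k - a2) ((a1 + 1) / 2), k - max (k - a2) ((a1 + 1) / 2),
      by omega, by omega, by omega, ?_⟩
    simp only [Nat.max_def]
    repeat' split
    all_goals omega
end

section
/- For every cograph G and every integer k with 0 ≤ k ≤ α(G), there exists a partition of V(G) into V1 and V2 such that G[V1] is 1-extendable, α(G[V1]) = k, and α(G[V2]) ≤ max(k − 1, α(G) − k). -/
open scoped Classical

variable {V : Type*}

/-- A cograph: a graph with no induced path on four vertices. -/
def IsCograph (G : SimpleGraph V) : Prop :=
  ¬ ∃ f : Fin 4 ↪ V, G.Adj (f 0) (f 1) ∧ G.Adj (f 1) (f 2) ∧ G.Adj (f 2) (f 3) ∧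
      ¬ G.Adj (f 0) (f 2) ∧ ¬ G.Adj (f 0) (f 3) ∧ ¬ G.Adj (f 1) (f 3)

/-!
Independence numbers are taken of vertex sets (`alphaOn G A`) rather than of induced
subgraphs, which only appear at the very end. A cograph on at least two vertices is
disconnected or has disconnected complement: if `A \ {v}` already splits, take a card-minimal
part `K` with no edges leaving it that contains a non-neighbour of `v`; unless `K` or its
complement splits off together with `v`, an edge of `K` from a neighbour to a non-neighbour of
`v`, together with a neighbour of `v` outside `K`, is an induced `P₄`. Hence every vertex set
`A` with `|A| ≥ 2` is `B ∪ C` with no edges or all edges between `B` and `C`, and the splitting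
follows by strong induction on `A`. For a disjoint union `α` is additive, and `k = k₁ + k₂` is
distributed with `k₁` close to `α(B) / 2`. For a join `α` is the maximum; take the union of the
parts found in `B` and `C` when `k` is at most both independence numbers, and otherwise the
part found in the larger side alone.
-/

section Decomposition

variable {G : SimpleGraph V}

theorem isCograph_iff : IsCograph G ↔ ∀ a b c d : V,
    ¬ (G.Adj a b ∧ G.Adj b c ∧ G.Adj c d ∧ ¬ G.Adj a c ∧ ¬ G.Adj a d ∧ ¬ G.Adj b d) := by
  refine ⟨fun hG a b c d ⟨hab, hbc, hcd, hac, had, hbd⟩ => hG ⟨⟨![a, b, c, d], ?_⟩,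
    hab, hbc, hcd, hac, had, hbd⟩, fun h ⟨f, hf⟩ => h _ _ _ _ hf⟩
  have := hab.ne; have := hbc.ne; have := hcd.ne
  have : a ≠ c := by rintro rfl; exact had hcd
  have : a ≠ d := by rintro rfl; exact hac hcd.symm
  have : b ≠ d := by rintro rfl; exact had hab
  intro i j
  fin_cases i <;> fin_cases j <;> simp_all [eq_comm]

theorem IsCograph.compl (hG : IsCograph G) : IsCograph Gᶜ := by
  rw [isCograph_iff] at hG ⊢
  rintro a b c d ⟨hab, hbc, hcd, hac, had, hbd⟩
  have hac' : a ≠ c := by rintro rfl; exact had hcd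
  have had' : a ≠ d := by rintro rfl; exact hac hcd.symm
  have hbd' : b ≠ d := by rintro rfl; exact had hab
  simp only [SimpleGraph.compl_adj, not_and, not_not] at hab hbc hcd hac had hbd
  exact hG b d a c ⟨hbd hbd', (had had').symm, hac hac', fun h => hab.2 h.symm, hbc.2,
    fun h => hcd.2 h.symm⟩

structure Disconnects (G : SimpleGraph V) (A B : Finset V) : Prop where
  subset : B ⊆ A
  nonempty : B.Nonempty
  sdiff_nonempty : (A \ B).Nonempty
  not_adj : ∀ u ∈ B, ∀ w ∈ A \ B, ¬ G.Adj u w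

namespace Disconnects

variable {A B : Finset V}

theorem ssubset (h : Disconnects G A B) : B ⊂ A :=
  Finset.ssubset_iff_subset_ne.2 ⟨h.subset, by rintro rfl; simpa using h.sdiff_nonempty⟩

theorem sdiff (h : Disconnects G A B) : Disconnects G A (A \ B) where
  subset := Finset.sdiff_subset
  nonempty := h.sdiff_nonempty
  sdiff_nonempty := by rw [Finset.sdiff_sdiff_eq_self h.subset]; exact h.nonempty
  not_adj u hu w hw huw := by
    rw [Finset.sdiff_sdiff_eq_self h.subset] at hw
    exact h.not_adj w hw u hu huw.symm

theorem insert_of_not_adj (h : Disconnects G A B) {v : V} (hv : v ∉ A)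
    (hvB : ∀ u ∈ B, ¬ G.Adj u v) : Disconnects G (insert v A) B where
  subset := h.subset.trans (Finset.subset_insert v A)
  nonempty := h.nonempty
  sdiff_nonempty :=
    ⟨v, Finset.mem_sdiff.2 ⟨Finset.mem_insert_self v A, fun hB => hv (h.subset hB)⟩⟩
  not_adj u hu w hw := by
    rw [Finset.insert_sdiff_of_notMem _ (fun hB => hv (h.subset hB)), Finset.mem_insert] at hw
    rcases hw with rfl | hw
    exacts [hvB u hu, h.not_adj u hu w hw]

end Disconnects

theorem disconnects_singleton {A : Finset V} {v : V} (hA : A.Nonempty) (hv : v ∉ A)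
    (h : ∀ x ∈ A, ¬ G.Adj v x) : Disconnects G (insert v A) {v} where
  subset := by simp
  nonempty := by simp
  sdiff_nonempty := by rwa [Finset.sdiff_singleton_eq_erase, Finset.erase_insert hv]
  not_adj u hu w hw := by
    rw [Finset.sdiff_singleton_eq_erase, Finset.erase_insert hv] at hw
    rw [Finset.mem_singleton.1 hu]
    exact h w hw

theorem Disconnects.exists_min_card {A B : Finset V} (h : Disconnects G A B) {x : V}
    (hx : x ∈ A) : ∃ K, x ∈ K ∧ Disconnects G A K ∧ ∀ S ⊆ A, x ∈ S →
      (∀ u ∈ S, ∀ w ∈ A \ S, ¬ G.Adj u w) → K.card ≤ S.card := by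
  obtain ⟨B', hxB', hB'⟩ : ∃ B', x ∈ B' ∧ Disconnects G A B' := by
    by_cases hxB : x ∈ B
    exacts [⟨B, hxB, h⟩, ⟨A \ B, Finset.mem_sdiff.2 ⟨hx, hxB⟩, h.sdiff⟩]
  let closed := A.powerset.filter fun S => x ∈ S ∧ ∀ u ∈ S, ∀ w ∈ A \ S, ¬ G.Adj u w
  obtain ⟨K, hK, hmin⟩ := closed.exists_min_image Finset.card
    ⟨B', Finset.mem_filter.2 ⟨Finset.mem_powerset.2 hB'.subset, hxB', hB'.not_adj⟩⟩
  simp only [closed, Finset.mem_filter, Finset.mem_powerset] at hK hmin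
  refine ⟨K, hK.2.1, ⟨hK.1, ⟨x, hK.2.1⟩, Finset.sdiff_nonempty.2 fun hAK => ?_, hK.2.2⟩,
    fun S hSA hxS hS => hmin S ⟨hSA, hxS, hS⟩⟩
  have := (Finset.card_le_card hAK).trans (hmin B' ⟨hB'.subset, hxB', hB'.not_adj⟩)
  exact (Finset.card_lt_card hB'.ssubset).not_ge this

-- A card-minimal `K` with no edges leaving it is connected, so some edge of `K` joins a
-- neighbour of `v` to a non-neighbour.
theorem exists_adj_across_of_min_card {A K : Finset V} {x v z₀ : V} (hK : Disconnects G A K)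
    (hmin : ∀ S ⊆ A, x ∈ S → (∀ u ∈ S, ∀ w ∈ A \ S, ¬ G.Adj u w) → K.card ≤ S.card)
    (hxK : x ∈ K) (hvx : ¬ G.Adj v x) (hz₀ : z₀ ∈ K) (hvz₀ : G.Adj v z₀) :
    ∃ z ∈ K, ∃ y ∈ K, G.Adj v z ∧ ¬ G.Adj v y ∧ G.Adj z y := by
  by_contra! hno
  let M := K.filter fun y => ¬ G.Adj v y
  have hz₀M : z₀ ∉ M := by simp [M, hvz₀]
  have hMK : M ⊂ K := Finset.ssubset_iff_subset_ne.2
    ⟨Finset.filter_subset _ _, fun hMK => hz₀M (hMK ▸ hz₀)⟩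
  refine (Finset.card_lt_card hMK).not_ge (hmin M (hMK.subset.trans hK.subset)
    (Finset.mem_filter.2 ⟨hxK, hvx⟩) fun u hu w hw huw => ?_)
  obtain ⟨huK, hvu⟩ := Finset.mem_filter.1 hu
  obtain ⟨hwA, hwM⟩ := Finset.mem_sdiff.1 hw
  by_cases hwK : w ∈ K
  · have hvw : G.Adj v w := by simpa [M, hwK] using hwM
    exact hno w hwK u huK hvw hvu huw.symm
  · exact hK.not_adj u huK w (Finset.mem_sdiff.2 ⟨hwA, hwK⟩) huw

theorem Disconnects.insert_or_compl (hG : IsCograph G) {A B : Finset V}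
    (h : Disconnects G A B) {v : V} (hv : v ∉ A) :
    ∃ B', Disconnects G (insert v A) B' ∨ Disconnects Gᶜ (insert v A) B' := by
  by_cases hfull : ∀ x ∈ A, G.Adj v x
  · refine ⟨{v}, Or.inr (disconnects_singleton (h.nonempty.mono h.subset) hv fun x hx => ?_)⟩
    simp [hfull x hx]
  push Not at hfull
  obtain ⟨x, hxA, hvx⟩ := hfull
  obtain ⟨K, hxK, hK, hmin⟩ := h.exists_min_card hxA
  by_cases hKv : ∀ z ∈ K, ¬ G.Adj v z
  · exact ⟨K, Or.inl (hK.insert_of_not_adj hv fun z hz hzv => hKv z hz hzv.symm)⟩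
  by_cases hKv' : ∀ w ∈ A \ K, ¬ G.Adj v w
  · exact ⟨A \ K, Or.inl (hK.sdiff.insert_of_not_adj hv fun w hw hwv => hKv' w hw hwv.symm)⟩
  push Not at hKv hKv'
  obtain ⟨z₀, hz₀, hvz₀⟩ := hKv
  obtain ⟨w, hw, hvw⟩ := hKv'
  obtain ⟨z, hz, y, hy, hvz, hvy, hzy⟩ :=
    exists_adj_across_of_min_card hK hmin hxK hvx hz₀ hvz₀
  exact (isCograph_iff.1 hG w v z y ⟨hvw.symm, hvz, hzy,
    fun hwz => hK.not_adj z hz w hw hwz.symm, fun hwy => hK.not_adj y hy w hw hwy.symm, hvy⟩).elim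

theorem IsCograph.exists_disconnects (hG : IsCograph G) {A : Finset V} (hA : 2 ≤ A.card) :
    ∃ B, Disconnects G A B ∨ Disconnects Gᶜ A B := by
  suffices ∀ A : Finset V, A.card ≤ 1 ∨ ∃ B, Disconnects G A B ∨ Disconnects Gᶜ A B from
    (this A).resolve_left (by omega)
  intro A
  induction A using Finset.induction_on with
  | empty => simp
  | insert v A hv ih =>
    rcases ih with hA | ⟨B, hB | hB⟩
    · rcases A.eq_empty_or_nonempty with rfl | hAne
      · simp
      obtain ⟨a, rfl⟩ := Finset.card_eq_one.1 (le_antisymm hA hAne.card_pos)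
      refine Or.inr ⟨{v}, ?_⟩
      by_cases hva : G.Adj v a
      · exact Or.inr (disconnects_singleton hAne hv (by simp [hva]))
      · exact Or.inl (disconnects_singleton hAne hv (by simpa using hva))
    · exact Or.inr (hB.insert_or_compl hG hv)
    · simpa [or_comm] using Or.inr (hB.insert_or_compl hG.compl hv)

end Decomposition

section IndependenceOn

variable {G : SimpleGraph V} {A B C S T : Finset V}

noncomputable def alphaOn (G : SimpleGraph V) (A : Finset V) : ℕ :=
  A.powerset.sup fun S => if IndepF G S then S.card else 0

def OneExtOn (G : SimpleGraph V) (A : Finset V) : Prop :=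
  ∀ v ∈ A, ∃ S ⊆ A, v ∈ S ∧ IndepF G S ∧ S.card = alphaOn G A

theorem alphaN_eq_alphaOn_univ [Fintype V] (G : SimpleGraph V) :
    alphaN G = alphaOn G Finset.univ := rfl

theorem IndepF.mono (hT : IndepF G T) (hST : S ⊆ T) : IndepF G S :=
  fun u hu v hv => hT u (hST hu) v (hST hv)

theorem IndepF.union (hS : IndepF G S) (hT : IndepF G T)
    (h : ∀ u ∈ S, ∀ w ∈ T, ¬ G.Adj u w) : IndepF G (S ∪ T) := by
  intro u hu w hw
  rcases Finset.mem_union.1 hu with hu | hu <;> rcases Finset.mem_union.1 hw with hw | hw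
  exacts [hS u hu w hw, h u hu w hw, fun huw => h w hw u hu huw.symm, hT u hu w hw]

theorem indepF_of_card_le_one (hA : A.card ≤ 1) : IndepF G A := by
  intro u hu w hw
  rw [Finset.card_le_one.1 hA u hu w hw]
  exact G.irrefl

theorem le_alphaOn (hSA : S ⊆ A) (hS : IndepF G S) : S.card ≤ alphaOn G A := by
  simpa [alphaOn, hS] using Finset.le_sup (f := fun S => if IndepF G S then S.card else 0)
    (Finset.mem_powerset.2 hSA)

theorem exists_indepF_card_eq_alphaOn (G : SimpleGraph V) (A : Finset V) :
    ∃ S ⊆ A, IndepF G S ∧ S.card = alphaOn G A := by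
  obtain ⟨S, hS, hmax⟩ := Finset.exists_mem_eq_sup A.powerset ⟨∅, by simp⟩
    fun S => if IndepF G S then S.card else 0
  by_cases hind : IndepF G S
  · exact ⟨S, Finset.mem_powerset.1 hS, hind, by simp [alphaOn, hmax, hind]⟩
  · exact ⟨∅, Finset.empty_subset A, by simp [IndepF], by simp [alphaOn, hmax, hind]⟩

theorem alphaOn_mono (h : A ⊆ B) : alphaOn G A ≤ alphaOn G B := by
  obtain ⟨S, hSA, hS, hcard⟩ := exists_indepF_card_eq_alphaOn G A
  exact hcard ▸ le_alphaOn (hSA.trans h) hS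

theorem IndepF.alphaOn_eq (hA : IndepF G A) : alphaOn G A = A.card := by
  obtain ⟨S, hSA, -, hcard⟩ := exists_indepF_card_eq_alphaOn G A
  exact le_antisymm (hcard ▸ Finset.card_le_card hSA) (le_alphaOn subset_rfl hA)

theorem IndepF.oneExtOn (hA : IndepF G A) : OneExtOn G A :=
  fun _ hv => ⟨A, subset_rfl, hv, hA, hA.alphaOn_eq.symm⟩

theorem alphaOn_union_le : alphaOn G (B ∪ C) ≤ alphaOn G B + alphaOn G C := by
  obtain ⟨S, hS, hind, hcard⟩ := exists_indepF_card_eq_alphaOn G (B ∪ C)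
  have hsplit : S = S ∩ B ∪ S ∩ C := by
    rw [← Finset.inter_union_distrib_left, Finset.inter_eq_left.2 hS]
  calc alphaOn G (B ∪ C) = (S ∩ B ∪ S ∩ C).card := by rw [← hsplit, hcard]
    _ ≤ (S ∩ B).card + (S ∩ C).card := Finset.card_union_le _ _
    _ ≤ alphaOn G B + alphaOn G C := add_le_add
      (le_alphaOn Finset.inter_subset_right (hind.mono Finset.inter_subset_left))
      (le_alphaOn Finset.inter_subset_right (hind.mono Finset.inter_subset_left))

theorem alphaOn_union_of_forall_not_adj (hd : Disjoint B C)
    (h : ∀ u ∈ B, ∀ w ∈ C, ¬ G.Adj u w) : alphaOn G (B ∪ C) = alphaOn G B + alphaOn G C := by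
  refine le_antisymm alphaOn_union_le ?_
  obtain ⟨S, hSB, hS, hScard⟩ := exists_indepF_card_eq_alphaOn G B
  obtain ⟨T, hTC, hT, hTcard⟩ := exists_indepF_card_eq_alphaOn G C
  rw [← hScard, ← hTcard, ← Finset.card_union_of_disjoint (hd.mono hSB hTC)]
  exact le_alphaOn (Finset.union_subset_union hSB hTC)
    (hS.union hT fun u hu w hw => h u (hSB hu) w (hTC hw))

theorem alphaOn_union_of_forall_adj (h : ∀ u ∈ B, ∀ w ∈ C, G.Adj u w) :
    alphaOn G (B ∪ C) = max (alphaOn G B) (alphaOn G C) := by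
  refine le_antisymm ?_ (max_le (alphaOn_mono Finset.subset_union_left)
    (alphaOn_mono Finset.subset_union_right))
  obtain ⟨S, hS, hind, hcard⟩ := exists_indepF_card_eq_alphaOn G (B ∪ C)
  rw [← hcard]
  by_cases hSB : ∃ u ∈ S, u ∈ B
  · obtain ⟨u, huS, huB⟩ := hSB
    refine le_max_of_le_left (le_alphaOn (fun w hw => ?_) hind)
    exact (Finset.mem_union.1 (hS hw)).resolve_right fun hwC => hind u huS w hw (h u huB w hwC)
  · push Not at hSB
    exact le_max_of_le_right (le_alphaOn
      (fun w hw => (Finset.mem_union.1 (hS hw)).resolve_left (hSB w hw)) hind)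

theorem OneExtOn.exists_indepF (h : OneExtOn G A) (v : V) :
    ∃ S ⊆ A, (v ∈ A → v ∈ S) ∧ IndepF G S ∧ S.card = alphaOn G A := by
  by_cases hv : v ∈ A
  · obtain ⟨S, hSA, hvS, hS⟩ := h v hv
    exact ⟨S, hSA, fun _ => hvS, hS⟩
  · obtain ⟨S, hSA, hS⟩ := exists_indepF_card_eq_alphaOn G A
    exact ⟨S, hSA, fun hv' => absurd hv' hv, hS⟩

theorem OneExtOn.union_of_forall_not_adj (hB : OneExtOn G B) (hC : OneExtOn G C)
    (hd : Disjoint B C) (h : ∀ u ∈ B, ∀ w ∈ C, ¬ G.Adj u w) : OneExtOn G (B ∪ C) := by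
  intro v hv
  obtain ⟨S, hSB, hvS, hS, hScard⟩ := hB.exists_indepF v
  obtain ⟨T, hTC, hvT, hT, hTcard⟩ := hC.exists_indepF v
  refine ⟨S ∪ T, Finset.union_subset_union hSB hTC, ?_,
    hS.union hT fun u hu w hw => h u (hSB hu) w (hTC hw), ?_⟩
  · rcases Finset.mem_union.1 hv with hv | hv
    exacts [Finset.mem_union_left T (hvS hv), Finset.mem_union_right S (hvT hv)]
  · rw [Finset.card_union_of_disjoint (hd.mono hSB hTC), hScard, hTcard,
      alphaOn_union_of_forall_not_adj hd h]

theorem OneExtOn.union_of_forall_adj (hB : OneExtOn G B) (hC : OneExtOn G C)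
    (h : ∀ u ∈ B, ∀ w ∈ C, G.Adj u w) (hBC : alphaOn G B = alphaOn G C) :
    OneExtOn G (B ∪ C) := by
  intro v hv
  rw [alphaOn_union_of_forall_adj h, ← hBC, max_self]
  rcases Finset.mem_union.1 hv with hv | hv
  · obtain ⟨S, hSB, hS⟩ := hB v hv
    exact ⟨S, hSB.trans Finset.subset_union_left, hS⟩
  · obtain ⟨S, hSC, hS⟩ := hC v hv
    exact ⟨S, hSC.trans Finset.subset_union_right, hBC ▸ hS⟩

end IndependenceOn

section Splitting

variable {G : SimpleGraph V} {A B C B₁ C₁ : Finset V} {k k₁ k₂ : ℕ}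

-- `B` and `A \ B` are the parts `V₁` and `V₂` of the theorem.
def IsSplitting (G : SimpleGraph V) (A : Finset V) (k : ℕ) (B : Finset V) : Prop :=
  B ⊆ A ∧ OneExtOn G B ∧ alphaOn G B = k ∧ alphaOn G (A \ B) ≤ max (k - 1) (alphaOn G A - k)

def HasSplittings (G : SimpleGraph V) (A : Finset V) : Prop :=
  ∀ k ≤ alphaOn G A, ∃ B, IsSplitting G A k B

theorem hasSplittings_of_indepF (hA : IndepF G A) : HasSplittings G A := by
  intro k hk
  rw [hA.alphaOn_eq] at hk
  obtain ⟨B, hBA, rfl⟩ := Finset.exists_subset_card_eq hk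
  refine ⟨B, hBA, (hA.mono hBA).oneExtOn, (hA.mono hBA).alphaOn_eq, ?_⟩
  rw [(hA.mono Finset.sdiff_subset).alphaOn_eq, Finset.card_sdiff_of_subset hBA, hA.alphaOn_eq]
  exact le_max_right _ _

-- `k₁` is `⌈b / 2⌉`, clamped to `[k - c, k]`.
theorem exists_balanced_add_eq {b c k : ℕ} (hk : k ≤ b + c) : ∃ k₁ k₂, k₁ ≤ b ∧ k₂ ≤ c ∧
    k₁ + k₂ = k ∧ max (k₁ - 1) (b - k₁) + max (k₂ - 1) (c - k₂) ≤ max (k - 1) (b + c - k) :=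
  ⟨min (max ((b + 1) / 2) (k - c)) k, k - min (max ((b + 1) / 2) (k - c)) k, by omega⟩

theorem union_sdiff_union_subset : (B ∪ C) \ (B₁ ∪ C₁) ⊆ B \ B₁ ∪ C \ C₁ := by
  intro x
  simp only [Finset.mem_sdiff, Finset.mem_union]
  tauto

theorem IsSplitting.union_of_forall_not_adj (h₁ : IsSplitting G B k₁ B₁)
    (h₂ : IsSplitting G C k₂ C₁) (hd : Disjoint B C) (h : ∀ u ∈ B, ∀ w ∈ C, ¬ G.Adj u w)
    (hk : max (k₁ - 1) (alphaOn G B - k₁) + max (k₂ - 1) (alphaOn G C - k₂) ≤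
      max (k₁ + k₂ - 1) (alphaOn G B + alphaOn G C - (k₁ + k₂))) :
    IsSplitting G (B ∪ C) (k₁ + k₂) (B₁ ∪ C₁) := by
  obtain ⟨hB₁, hx₁, ha₁, hr₁⟩ := h₁
  obtain ⟨hC₁, hx₂, ha₂, hr₂⟩ := h₂
  have h' : ∀ u ∈ B₁, ∀ w ∈ C₁, ¬ G.Adj u w := fun u hu w hw => h u (hB₁ hu) w (hC₁ hw)
  refine ⟨Finset.union_subset_union hB₁ hC₁,
    hx₁.union_of_forall_not_adj hx₂ (hd.mono hB₁ hC₁) h',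
    by rw [alphaOn_union_of_forall_not_adj (hd.mono hB₁ hC₁) h', ha₁, ha₂], ?_⟩
  calc alphaOn G ((B ∪ C) \ (B₁ ∪ C₁)) ≤ alphaOn G (B \ B₁ ∪ C \ C₁) :=
        alphaOn_mono union_sdiff_union_subset
    _ ≤ alphaOn G (B \ B₁) + alphaOn G (C \ C₁) := alphaOn_union_le
    _ ≤ _ := (add_le_add hr₁ hr₂).trans hk
    _ = _ := by rw [alphaOn_union_of_forall_not_adj hd h]

theorem IsSplitting.union_of_forall_adj (h₁ : IsSplitting G B k B₁) (h₂ : IsSplitting G C k C₁)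
    (h : ∀ u ∈ B, ∀ w ∈ C, G.Adj u w) : IsSplitting G (B ∪ C) k (B₁ ∪ C₁) := by
  obtain ⟨hB₁, hx₁, ha₁, hr₁⟩ := h₁
  obtain ⟨hC₁, hx₂, ha₂, hr₂⟩ := h₂
  have h' : ∀ u ∈ B₁, ∀ w ∈ C₁, G.Adj u w := fun u hu w hw => h u (hB₁ hu) w (hC₁ hw)
  refine ⟨Finset.union_subset_union hB₁ hC₁, hx₁.union_of_forall_adj hx₂ h' (ha₁.trans ha₂.symm),
    by rw [alphaOn_union_of_forall_adj h', ha₁, ha₂, max_self], ?_⟩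
  calc alphaOn G ((B ∪ C) \ (B₁ ∪ C₁)) ≤ alphaOn G (B \ B₁ ∪ C \ C₁) :=
        alphaOn_mono union_sdiff_union_subset
    _ = max (alphaOn G (B \ B₁)) (alphaOn G (C \ C₁)) := alphaOn_union_of_forall_adj
        fun u hu w hw => h u (Finset.sdiff_subset hu) w (Finset.sdiff_subset hw)
    _ ≤ max (k - 1) (max (alphaOn G B) (alphaOn G C) - k) := by omega
    _ = _ := by rw [alphaOn_union_of_forall_adj h]

theorem IsSplitting.union_of_forall_adj_of_lt (h₁ : IsSplitting G B k B₁)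
    (h : ∀ u ∈ B, ∀ w ∈ C, G.Adj u w) (hC : alphaOn G C < k) : IsSplitting G (B ∪ C) k B₁ := by
  obtain ⟨hB₁, hx₁, ha₁, hr₁⟩ := h₁
  refine ⟨hB₁.trans Finset.subset_union_left, hx₁, ha₁, ?_⟩
  calc alphaOn G ((B ∪ C) \ B₁) ≤ alphaOn G (B \ B₁ ∪ C) := alphaOn_mono <| by
        rw [Finset.union_sdiff_distrib]
        exact Finset.union_subset_union subset_rfl Finset.sdiff_subset
    _ = max (alphaOn G (B \ B₁)) (alphaOn G C) :=
        alphaOn_union_of_forall_adj fun u hu w hw => h u (Finset.sdiff_subset hu) w hw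
    _ ≤ max (k - 1) (max (alphaOn G B) (alphaOn G C) - k) := by omega
    _ = _ := by rw [alphaOn_union_of_forall_adj h]

theorem HasSplittings.union_of_forall_not_adj (hB : HasSplittings G B) (hC : HasSplittings G C)
    (hd : Disjoint B C) (h : ∀ u ∈ B, ∀ w ∈ C, ¬ G.Adj u w) : HasSplittings G (B ∪ C) := by
  intro k hk
  rw [alphaOn_union_of_forall_not_adj hd h] at hk
  obtain ⟨k₁, k₂, hk₁, hk₂, rfl, hbal⟩ := exists_balanced_add_eq hk
  obtain ⟨B₁, h₁⟩ := hB k₁ hk₁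
  obtain ⟨C₁, h₂⟩ := hC k₂ hk₂
  exact ⟨B₁ ∪ C₁, h₁.union_of_forall_not_adj h₂ hd h hbal⟩

theorem HasSplittings.union_of_forall_adj (hB : HasSplittings G B) (hC : HasSplittings G C)
    (h : ∀ u ∈ B, ∀ w ∈ C, G.Adj u w) : HasSplittings G (B ∪ C) := by
  intro k hk
  rw [alphaOn_union_of_forall_adj h] at hk
  rcases le_or_gt k (alphaOn G B) with hkB | hkB <;> rcases le_or_gt k (alphaOn G C) with hkC | hkC
  · obtain ⟨B₁, h₁⟩ := hB k hkB
    obtain ⟨C₁, h₂⟩ := hC k hkC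
    exact ⟨B₁ ∪ C₁, h₁.union_of_forall_adj h₂ h⟩
  · obtain ⟨B₁, h₁⟩ := hB k hkB
    exact ⟨B₁, h₁.union_of_forall_adj_of_lt h hkC⟩
  · obtain ⟨C₁, h₂⟩ := hC k hkC
    rw [Finset.union_comm]
    exact ⟨C₁, h₂.union_of_forall_adj_of_lt (fun u hu w hw => (h w hw u hu).symm) hkB⟩
  · omega

theorem IsCograph.hasSplittings (hG : IsCograph G) (A : Finset V) : HasSplittings G A := by
  induction A using Finset.strongInduction with
  | H A ih =>
  by_cases hA : A.card ≤ 1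
  · exact hasSplittings_of_indepF (indepF_of_card_le_one hA)
  obtain ⟨B, hB | hB⟩ := hG.exists_disconnects (by omega : 2 ≤ A.card)
  · rw [← Finset.union_sdiff_of_subset hB.subset]
    exact (ih B hB.ssubset).union_of_forall_not_adj (ih _ hB.sdiff.ssubset)
      Finset.disjoint_sdiff hB.not_adj
  · rw [← Finset.union_sdiff_of_subset hB.subset]
    refine (ih B hB.ssubset).union_of_forall_adj (ih _ hB.sdiff.ssubset) fun u hu w hw => ?_
    have huw : u ≠ w := by rintro rfl; exact (Finset.mem_sdiff.1 hw).2 hu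
    simpa [huw] using hB.not_adj u hu w hw

end Splitting

section Induce

variable {G : SimpleGraph V} {A : Finset V} {S : Set V}

theorem indepF_induce_iff {T : Finset S} :
    IndepF (G.induce S) T ↔ IndepF G (T.map (Function.Embedding.subtype _)) := by
  simp [IndepF]

theorem exists_indepF_induce {T : Finset V} (hTA : T ⊆ A) (hT : IndepF G T) :
    ∃ T' : Finset (A : Set V), T'.map (Function.Embedding.subtype _) = T ∧
      IndepF (G.induce (A : Set V)) T' := by
  have hmap := Finset.subtype_map_of_mem (p := (· ∈ (A : Set V))) fun x hx => hTA hx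
  exact ⟨_, hmap, indepF_induce_iff.2 (by rwa [hmap])⟩

-- The `Fintype` instance is an ordinary implicit argument, so that the lemma applies to whatever
-- instance the goal carries (those in the theorem come from classical decidability).
theorem alphaN_induce {_ : Fintype S} (hA : (A : Set V) = S) :
    alphaN (G.induce S) = alphaOn G A := by
  subst hA
  apply le_antisymm
  · obtain ⟨T, -, hT, hcard⟩ := exists_indepF_card_eq_alphaOn (G.induce A) Finset.univ
    rw [alphaN_eq_alphaOn_univ, ← hcard, ← Finset.card_map (Function.Embedding.subtype _)]
    refine le_alphaOn (fun x hx => ?_) (indepF_induce_iff.1 hT)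
    obtain ⟨y, -, rfl⟩ := Finset.mem_map.1 hx
    exact y.2
  · obtain ⟨T, hTA, hT, hcard⟩ := exists_indepF_card_eq_alphaOn G A
    obtain ⟨T', hmap, hT'⟩ := exists_indepF_induce hTA hT
    rw [← hcard, ← hmap, Finset.card_map, alphaN_eq_alphaOn_univ]
    exact le_alphaOn (Finset.subset_univ _) hT'

theorem OneExtOn.oneExt_induce {_ : Fintype S} (h : OneExtOn G A) (hA : (A : Set V) = S) :
    OneExt (G.induce S) := by
  subst hA
  intro v
  obtain ⟨T, hTA, hvT, hT, hcard⟩ := h v v.2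
  obtain ⟨T', hmap, hT'⟩ := exists_indepF_induce hTA hT
  refine ⟨T', ?_, hT', ?_⟩
  · rw [← hmap] at hvT
    obtain ⟨w, hw, hwv⟩ := Finset.mem_map.1 hvT
    exact Subtype.ext hwv ▸ hw
  · rw [alphaN_induce rfl, ← hcard, ← hmap, Finset.card_map]

end Induce

/-- Key splitting lemma: from a cograph one can split off a 1-extendable induced
subgraph of prescribed independence number while controlling the remainder. -/
theorem cograph_split [Fintype V] (G : SimpleGraph V) (hG : IsCograph G)
    (k : ℕ) (hk : k ≤ alphaN G) :
    ∃ W : Set V, OneExt (G.induce W) ∧ alphaN (G.induce W) = k ∧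
      alphaN (G.induce Wᶜ) ≤ max (k - 1) (alphaN G - k) := by
  obtain ⟨B, -, hB, hBk, hrest⟩ := hG.hasSplittings Finset.univ k hk
  refine ⟨B, hB.oneExt_induce rfl, (alphaN_induce rfl).trans hBk, ?_⟩
  rwa [alphaN_induce (Finset.coe_compl B), Finset.compl_eq_univ_sdiff]
end
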